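/- Nonlinear spectral gap bound for Hilbert isomorphs: let X be a normed space admitting a Hilbertian norm ‖·‖_H with ‖y‖_H ≤ ‖y‖_X ≤ d‖y‖_H for all y ∈ X. Then for every n × n row-stochastic matrix A reversible with respect to a fully-supported probability measure π on {1,…,n} with λ₂(A) < 1, the nonlinear spectral gap satisfies √γ(A, ‖·‖_X²) ≤ C log(2d)/(1 − λ₂(A)) for a universal constant C. -/

import Mathlib

/-!
Let `P = (1 + A) / 2` be the lazy walk and `μ = (1 + λ₂(A)) / 2`. On `L²(π; H)` the operator `P`
is self-adjoint and positive, and on mean-zero functions `⟪u, P u⟫ ≤ μ ‖u‖²` (the scalar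
Rayleigh bound defining `λ₂` passes to `H` through orthonormal coordinates), so Cauchy–Schwarz
for the form `⟪u, P w⟫` gives `‖P v‖ ≤ μ ‖v‖`. Transported to `X` through `T` this costs a factor
`d`, so for `t ≈ log (2d) / (1 - μ)` the centred function `z = x - x̄` satisfies
`‖Pᵗ z‖ ≤ ‖z‖ / 2`, hence `‖z‖ ≤ 2 ‖x - Pᵗ x‖ ≤ 2t ‖x - P x‖`: the last step telescopes, `P`
being a contraction of `L²(π; X)`. Jensen bounds `‖x - P x‖²` by half the Dirichlet energy of
`A`, so `∑ πᵢ πⱼ ‖xᵢ - xⱼ‖² ≤ 4 ‖z‖² ≤ 8 t² ∑ πᵢ aᵢⱼ ‖xᵢ - xⱼ‖²`.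
-/

open scoped BigOperators

/-- The second-largest eigenvalue of A as a self-adjoint operator on L₂(π). -/
noncomputable def lambdaTwo (n : ℕ) (π : Fin n → ℝ)
    (A : Matrix (Fin n) (Fin n) ℝ) : ℝ :=
  sSup {r : ℝ | ∃ u : Fin n → ℝ, (∑ i, π i * u i) = 0 ∧
    (∑ i, π i * u i ^ 2) = 1 ∧ r = ∑ i, ∑ j, π i * A i j * u i * u j}

/-- The nonlinear spectral gap γ(A, ‖·‖_X²) of A with respect to the squared
norm of a normed space X. -/
noncomputable def nonlinearSpectralGapSq (n : ℕ) (π : Fin n → ℝ)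
    (A : Matrix (Fin n) (Fin n) ℝ) (X : Type*) [NormedAddCommGroup X] : ℝ :=
  sInf {γ : ℝ | 0 < γ ∧ ∀ x : Fin n → X,
    ∑ i, ∑ j, π i * π j * ‖x i - x j‖ ^ 2 ≤
      γ * ∑ i, ∑ j, π i * A i j * ‖x i - x j‖ ^ 2}

open Finset
open scoped RealInnerProductSpace

variable {ι : Type*} [Fintype ι]

structure IsReversibleStochastic (π : ι → ℝ) (A : Matrix ι ι ℝ) : Prop where
  nonneg : ∀ i j, 0 ≤ A i j
  sum_row : ∀ i, ∑ j, A i j = 1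
  reversible : ∀ i j, π i * A i j = π j * A j i

namespace IsReversibleStochastic

variable {π : ι → ℝ} {A : Matrix ι ι ℝ}

theorem stationary (hA : IsReversibleStochastic π A) (j : ι) : ∑ i, π i * A i j = π j := by
  simp_rw [hA.reversible _ j, ← mul_sum, hA.sum_row, mul_one]

theorem sum_sum_mul_left (hA : IsReversibleStochastic π A) (f : ι → ℝ) :
    ∑ i, ∑ j, π i * A i j * f i = ∑ i, π i * f i := by
  refine sum_congr rfl fun i _ => ?_
  rw [← sum_mul, ← mul_sum, hA.sum_row, mul_one]

theorem sum_sum_mul_right (hA : IsReversibleStochastic π A) (f : ι → ℝ) :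
    ∑ i, ∑ j, π i * A i j * f j = ∑ j, π j * f j := by
  rw [sum_comm]
  exact sum_congr rfl fun j _ => by rw [← sum_mul, hA.stationary]

end IsReversibleStochastic

noncomputable def lazyWalk [DecidableEq ι] (A : Matrix ι ι ℝ) : Matrix ι ι ℝ := (2 : ℝ)⁻¹ • (1 + A)

theorem IsReversibleStochastic.lazyWalk [DecidableEq ι] {π : ι → ℝ} {A : Matrix ι ι ℝ}
    (hA : IsReversibleStochastic π A) : IsReversibleStochastic π (lazyWalk A) where
  nonneg i j := by
    have := hA.nonneg i j
    simp only [_root_.lazyWalk, Matrix.smul_apply, Matrix.add_apply, Matrix.one_apply]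
    split_ifs <;> positivity
  sum_row i := by
    simp [_root_.lazyWalk, Matrix.one_apply, sum_add_distrib, ← mul_sum, hA.sum_row]
    norm_num
  reversible i j := by
    simp only [_root_.lazyWalk, Matrix.smul_apply, Matrix.add_apply, Matrix.one_apply,
      eq_comm (a := j), smul_eq_mul]
    split_ifs with h
    · rw [h]
    · linear_combination (2 : ℝ)⁻¹ * hA.reversible i j

section MarkovOperator

variable {M : Type*} [AddCommMonoid M] [Module ℝ M]

def markovOp (B : Matrix ι ι ℝ) : Module.End ℝ (ι → M) :=
  LinearMap.pi fun i => ∑ j, B i j • LinearMap.proj j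

@[simp]
theorem markovOp_apply (B : Matrix ι ι ℝ) (z : ι → M) (i : ι) :
    markovOp B z i = ∑ j, B i j • z j := by
  simp [markovOp]

theorem markovOp_lazyWalk_apply [DecidableEq ι] (A : Matrix ι ι ℝ) (z : ι → M) (i : ι) :
    markovOp (lazyWalk A) z i = (2 : ℝ)⁻¹ • (z i + markovOp A z i) := by
  simp [lazyWalk, Matrix.one_apply, add_smul, sum_add_distrib, ← smul_sum, mul_smul, ite_smul]

theorem markovOp_pow_const {B : Matrix ι ι ℝ} (hB : ∀ i, ∑ j, B i j = 1) (t : ℕ) (c : M) :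
    (markovOp B ^ t) (fun _ => c) = fun _ => c := by
  have hfix : Function.IsFixedPt (markovOp B) (fun _ : ι => c) := by
    ext i; simp [← sum_smul, hB]
  rw [Module.End.pow_apply, hfix.iterate t]

theorem markovOp_pow_compLeft (B : Matrix ι ι ℝ) {N : Type*} [AddCommMonoid N] [Module ℝ N]
    (T : M →ₗ[ℝ] N) (t : ℕ) (z : ι → M) :
    (markovOp B ^ t) (T ∘ z) = T ∘ (markovOp B ^ t) z := by
  have h : (markovOp B).comp (T.compLeft ι) = (T.compLeft ι).comp (markovOp B) := by
    ext z i; simp [map_sum, map_smul]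
  exact LinearMap.congr_fun (Module.End.commute_pow_left_of_commute h t) z

theorem sum_smul_markovOp {π : ι → ℝ} {B : Matrix ι ι ℝ} (hB : IsReversibleStochastic π B)
    (z : ι → M) : ∑ i, π i • markovOp B z i = ∑ i, π i • z i := by
  simp_rw [markovOp_apply, smul_sum, smul_smul]
  rw [sum_comm]
  simp_rw [← sum_smul, hB.stationary]

end MarkovOperator

section WeightedNorm

variable {X : Type*} [NormedAddCommGroup X] {π : ι → ℝ}

noncomputable def weightedL2Norm (π : ι → ℝ) (z : ι → X) : ℝ := √(∑ i, π i * ‖z i‖ ^ 2)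

theorem weightedL2Norm_nonneg (π : ι → ℝ) (z : ι → X) : 0 ≤ weightedL2Norm π z :=
  Real.sqrt_nonneg _

theorem sq_weightedL2Norm (hπ : ∀ i, 0 ≤ π i) (z : ι → X) :
    weightedL2Norm π z ^ 2 = ∑ i, π i * ‖z i‖ ^ 2 :=
  Real.sq_sqrt (sum_nonneg fun i _ => mul_nonneg (hπ i) (sq_nonneg _))

theorem weightedL2Norm_le_mul_of_norm_le {Y : Type*} [NormedAddCommGroup Y]
    (hπ : ∀ i, 0 ≤ π i) {c : ℝ} (hc : 0 ≤ c) {u : ι → X} {w : ι → Y}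
    (h : ∀ i, ‖u i‖ ≤ c * ‖w i‖) : weightedL2Norm π u ≤ c * weightedL2Norm π w := by
  rw [weightedL2Norm, weightedL2Norm, ← Real.sqrt_sq hc, ← Real.sqrt_mul (sq_nonneg c), mul_sum]
  refine Real.sqrt_le_sqrt (sum_le_sum fun i _ => ?_)
  calc π i * ‖u i‖ ^ 2 ≤ π i * (c * ‖w i‖) ^ 2 := by
        gcongr
        · exact hπ i
        · exact h i
    _ = c ^ 2 * (π i * ‖w i‖ ^ 2) := by ring

theorem sum_sum_mul_mul_norm_sub_sq_le (hπ : ∀ i, 0 ≤ π i) (hπ₁ : ∑ i, π i = 1) (x : ι → X)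
    (c : X) :
    ∑ i, ∑ j, π i * π j * ‖x i - x j‖ ^ 2 ≤ 4 * weightedL2Norm π (x - fun _ => c) ^ 2 := by
  have hterm (i j : ι) : ‖x i - x j‖ ^ 2 ≤ 2 * ‖x i - c‖ ^ 2 + 2 * ‖x j - c‖ ^ 2 := by
    have h := norm_sub_le (x i - c) (x j - c)
    rw [sub_sub_sub_cancel_right] at h
    nlinarith [norm_nonneg (x i - x j), sq_nonneg (‖x i - c‖ - ‖x j - c‖)]
  calc ∑ i, ∑ j, π i * π j * ‖x i - x j‖ ^ 2
      ≤ ∑ i, ∑ j, π i * π j * (2 * ‖x i - c‖ ^ 2 + 2 * ‖x j - c‖ ^ 2) := by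
        gcongr with i _ j _
        · exact mul_nonneg (hπ i) (hπ j)
        · exact hterm i j
    _ = 4 * ∑ i, π i * ‖x i - c‖ ^ 2 := by
        have hleft (i : ι) : ∑ j, π i * π j * (2 * ‖x i - c‖ ^ 2) = 2 * (π i * ‖x i - c‖ ^ 2) := by
          rw [← sum_mul, ← mul_sum, hπ₁]; ring
        have hright (j : ι) : ∑ i, π i * π j * (2 * ‖x j - c‖ ^ 2) = 2 * (π j * ‖x j - c‖ ^ 2) := by
          rw [← sum_mul, ← sum_mul, hπ₁]; ring
        simp only [mul_add, sum_add_distrib, hleft]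
        rw [sum_comm]
        simp only [hright, ← mul_sum]
        ring
    _ = 4 * weightedL2Norm π (x - fun _ => c) ^ 2 := by rw [sq_weightedL2Norm hπ]; rfl

theorem sum_sum_mul_lazyWalk_norm_sub_sq [DecidableEq ι] (A : Matrix ι ι ℝ) (x : ι → X) :
    ∑ i, ∑ j, π i * lazyWalk A i j * ‖x i - x j‖ ^ 2 =
      (∑ i, ∑ j, π i * A i j * ‖x i - x j‖ ^ 2) / 2 := by
  simp [lazyWalk, Matrix.one_apply, mul_add, add_mul, sum_add_distrib, ite_mul, sum_div]
  exact sum_congr rfl fun i _ => sum_congr rfl fun j _ => by ring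

variable [NormedSpace ℝ X]

theorem weightedL2Norm_eq_norm_toLp (hπ : ∀ i, 0 ≤ π i) (z : ι → X) :
    weightedL2Norm π z = ‖(WithLp.toLp 2 fun i => √(π i) • z i : PiLp 2 fun _ : ι => X)‖ := by
  simp [weightedL2Norm, PiLp.norm_eq_of_L2, norm_smul, mul_pow, Real.sq_sqrt (hπ _)]

theorem weightedL2Norm_add_le (hπ : ∀ i, 0 ≤ π i) (u w : ι → X) :
    weightedL2Norm π (u + w) ≤ weightedL2Norm π u + weightedL2Norm π w := by
  simp only [weightedL2Norm_eq_norm_toLp hπ, Pi.add_apply, smul_add]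
  exact norm_add_le (WithLp.toLp 2 fun i => √(π i) • u i : PiLp 2 fun _ : ι => X)
    (WithLp.toLp 2 fun i => √(π i) • w i)

theorem norm_sum_smul_sq_le {w : ι → ℝ} (hw₀ : ∀ j, 0 ≤ w j) (hw₁ : ∑ j, w j = 1)
    (z : ι → X) : ‖∑ j, w j • z j‖ ^ 2 ≤ ∑ j, w j * ‖z j‖ ^ 2 :=
  (convexOn_univ_norm.pow (fun _ _ => norm_nonneg _) 2).map_sum_le
    (fun j _ => hw₀ j) hw₁ (fun _ _ => Set.mem_univ _)

theorem weightedL2Norm_markovOp_le {B : Matrix ι ι ℝ} (hB : IsReversibleStochastic π B)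
    (hπ : ∀ i, 0 ≤ π i) (z : ι → X) : weightedL2Norm π (markovOp B z) ≤ weightedL2Norm π z := by
  refine Real.sqrt_le_sqrt ?_
  calc ∑ i, π i * ‖markovOp B z i‖ ^ 2 ≤ ∑ i, π i * ∑ j, B i j * ‖z j‖ ^ 2 := by
        gcongr with i
        · exact hπ i
        rw [markovOp_apply]
        exact norm_sum_smul_sq_le (hB.nonneg i) (hB.sum_row i) z
    _ = ∑ j, π j * ‖z j‖ ^ 2 := by
        simp_rw [mul_sum, ← mul_assoc]
        exact hB.sum_sum_mul_right _

theorem weightedL2Norm_markovOp_pow_le {B : Matrix ι ι ℝ} (hB : IsReversibleStochastic π B)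
    (hπ : ∀ i, 0 ≤ π i) (t : ℕ) (z : ι → X) :
    weightedL2Norm π ((markovOp B ^ t) z) ≤ weightedL2Norm π z := by
  induction t with
  | zero => rfl
  | succ t ih =>
    rw [pow_succ', Module.End.mul_apply]
    exact (weightedL2Norm_markovOp_le hB hπ _).trans ih

theorem sq_weightedL2Norm_sub_markovOp_le {B : Matrix ι ι ℝ} (hB : IsReversibleStochastic π B)
    (hπ : ∀ i, 0 ≤ π i) (x : ι → X) :
    weightedL2Norm π (x - markovOp B x) ^ 2 ≤ ∑ i, ∑ j, π i * B i j * ‖x i - x j‖ ^ 2 := by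
  have hsub (i : ι) : x i - markovOp B x i = ∑ j, B i j • (x i - x j) := by
    simp [smul_sub, sum_sub_distrib, ← sum_smul, hB.sum_row]
  rw [sq_weightedL2Norm hπ]
  refine sum_le_sum fun i _ => ?_
  rw [Pi.sub_apply, hsub]
  simp_rw [mul_assoc, ← mul_sum]
  exact mul_le_mul_of_nonneg_left (norm_sum_smul_sq_le (hB.nonneg i) (hB.sum_row i) _) (hπ i)

theorem weightedL2Norm_sub_markovOp_pow_le {B : Matrix ι ι ℝ} (hB : IsReversibleStochastic π B)
    (hπ : ∀ i, 0 ≤ π i) (t : ℕ) (x : ι → X) :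
    weightedL2Norm π (x - (markovOp B ^ t) x) ≤ t * weightedL2Norm π (x - markovOp B x) := by
  induction t with
  | zero => simp [weightedL2Norm]
  | succ t ih =>
    have htel : x - (markovOp B ^ (t + 1)) x =
        (x - (markovOp B ^ t) x) + (markovOp B ^ t) (x - markovOp B x) := by
      rw [map_sub, pow_succ, Module.End.mul_apply]; abel
    rw [htel, Nat.cast_succ, add_one_mul]
    exact (weightedL2Norm_add_le hπ _ _).trans
      (add_le_add ih (weightedL2Norm_markovOp_pow_le hB hπ t _))

end WeightedNorm

namespace LinearMap.BilinForm

variable {M : Type*} [AddCommGroup M] [Module ℝ M]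

theorem apply_map_map_le (G : LinearMap.BilinForm ℝ M) (hG : ∀ u, 0 ≤ G u u) {P : Module.End ℝ M}
    (hP : ∀ u w, G u (P w) = G (P u) w) (hP₀ : ∀ u, 0 ≤ G u (P u)) {V : Set M}
    (hPV : Set.MapsTo P V V) {μ : ℝ} (hμ : ∀ u ∈ V, G u (P u) ≤ μ * G u u) {u : M}
    (hu : u ∈ V) : G (P u) (P u) ≤ μ ^ 2 * G u u := by
  have hcs : G (P u) (P u) * G (P u) (P u) ≤ G (P u) (P (P u)) * G u (P u) := by
    simpa only [compl₂_apply, hP u (P u)] using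
      apply_mul_apply_le_of_forall_zero_le (G.compl₂ P) hP₀ (P u) u
  have hsq : G (P u) (P u) * G (P u) (P u) ≤ G (P u) (P u) * (μ ^ 2 * G u u) :=
    calc _ ≤ G (P u) (P (P u)) * G u (P u) := hcs
      _ ≤ (μ * G (P u) (P u)) * (μ * G u u) :=
          mul_le_mul (hμ _ (hPV hu)) (hμ u hu) (hP₀ u) ((hP₀ _).trans (hμ _ (hPV hu)))
      _ = G (P u) (P u) * (μ ^ 2 * G u u) := by ring
  rcases (hG (P u)).eq_or_lt with ha | ha
  · rw [← ha]; have := hG u; positivity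
  · exact le_of_mul_le_mul_left hsq ha

theorem apply_pow_pow_le (G : LinearMap.BilinForm ℝ M) (hG : ∀ u, 0 ≤ G u u) {P : Module.End ℝ M}
    (hP : ∀ u w, G u (P w) = G (P u) w) (hP₀ : ∀ u, 0 ≤ G u (P u)) {V : Set M}
    (hPV : Set.MapsTo P V V) {μ : ℝ} (hμ : ∀ u ∈ V, G u (P u) ≤ μ * G u u) (t : ℕ) {u : M}
    (hu : u ∈ V) : G ((P ^ t) u) ((P ^ t) u) ≤ (μ ^ 2) ^ t * G u u := by
  induction t generalizing u with
  | zero => simp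
  | succ t ih =>
    rw [pow_succ, Module.End.mul_apply, pow_succ, mul_assoc]
    calc _ ≤ (μ ^ 2) ^ t * G (P u) (P u) := ih (hPV hu)
      _ ≤ (μ ^ 2) ^ t * (μ ^ 2 * G u u) := by
          gcongr
          exact apply_map_map_le G hG hP hP₀ hPV hμ hu

end LinearMap.BilinForm

section Hilbert

variable {E : Type*} [NormedAddCommGroup E] [InnerProductSpace ℝ E] {π : ι → ℝ}

noncomputable def weightedInner (π : ι → ℝ) : LinearMap.BilinForm ℝ (ι → E) :=
  ∑ i, π i • (innerₗ E).compl₁₂ (LinearMap.proj i) (LinearMap.proj i)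

@[simp]
theorem weightedInner_apply (u w : ι → E) : weightedInner π u w = ∑ i, π i * ⟪u i, w i⟫ := by
  simp [weightedInner]

theorem weightedInner_self (hπ : ∀ i, 0 ≤ π i) (u : ι → E) :
    weightedInner π u u = weightedL2Norm π u ^ 2 := by
  simp [sq_weightedL2Norm hπ]

theorem weightedInner_markovOp (B : Matrix ι ι ℝ) (u w : ι → E) :
    weightedInner π u (markovOp B w) = ∑ i, ∑ j, π i * B i j * ⟪u i, w j⟫ := by
  simp [inner_sum, inner_smul_right, mul_sum, mul_assoc]

theorem weightedInner_markovOp_comm {B : Matrix ι ι ℝ}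
    (hB : ∀ i j, π i * B i j = π j * B j i) (u w : ι → E) :
    weightedInner π u (markovOp B w) = weightedInner π (markovOp B u) w := by
  rw [weightedInner_markovOp, sum_comm]
  simp [sum_inner, inner_smul_left, mul_sum, ← mul_assoc, hB _ _]

theorem abs_sum_sum_mul_inner_le {A : Matrix ι ι ℝ} (hA : IsReversibleStochastic π A)
    (hπ : ∀ i, 0 ≤ π i) (u : ι → E) :
    |∑ i, ∑ j, π i * A i j * ⟪u i, u j⟫| ≤ ∑ i, π i * ‖u i‖ ^ 2 := by
  have hterm (i j : ι) :
      |π i * A i j * ⟪u i, u j⟫| ≤ π i * A i j * (‖u i‖ ^ 2 / 2 + ‖u j‖ ^ 2 / 2) := by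
    have hπA : 0 ≤ π i * A i j := mul_nonneg (hπ i) (hA.nonneg i j)
    rw [abs_mul, abs_of_nonneg hπA]
    refine mul_le_mul_of_nonneg_left ((abs_real_inner_le_norm _ _).trans ?_) hπA
    nlinarith [sq_nonneg (‖u i‖ - ‖u j‖)]
  calc |∑ i, ∑ j, π i * A i j * ⟪u i, u j⟫|
      ≤ ∑ i, ∑ j, π i * A i j * (‖u i‖ ^ 2 / 2 + ‖u j‖ ^ 2 / 2) :=
        (abs_sum_le_sum_abs _ _).trans <| sum_le_sum fun i _ =>
          (abs_sum_le_sum_abs _ _).trans <| sum_le_sum fun j _ => hterm i j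
    _ = ∑ i, π i * ‖u i‖ ^ 2 := by
        simp only [mul_add, sum_add_distrib, hA.sum_sum_mul_left, hA.sum_sum_mul_right]
        simp only [mul_div_assoc', ← sum_div]
        ring

theorem abs_sum_sum_mul_mul_le {A : Matrix ι ι ℝ} (hA : IsReversibleStochastic π A)
    (hπ : ∀ i, 0 ≤ π i) (g : ι → ℝ) :
    |∑ i, ∑ j, π i * A i j * g i * g j| ≤ ∑ i, π i * g i ^ 2 := by
  have h := abs_sum_sum_mul_inner_le hA hπ g
  simp only [Real.inner_apply, Real.norm_eq_abs, sq_abs, ← mul_assoc] at h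
  exact h

theorem weightedInner_markovOp_lazyWalk [DecidableEq ι] (A : Matrix ι ι ℝ) (u : ι → E) :
    weightedInner π u (markovOp (lazyWalk A) u) =
      (weightedInner π u u + weightedInner π u (markovOp A u)) / 2 := by
  have h : markovOp (lazyWalk A) u = (2 : ℝ)⁻¹ • (u + markovOp A u) :=
    funext (markovOp_lazyWalk_apply A u)
  rw [h, map_smul, map_add, smul_eq_mul]
  ring

theorem weightedInner_markovOp_lazyWalk_nonneg [DecidableEq ι] {A : Matrix ι ι ℝ}
    (hA : IsReversibleStochastic π A) (hπ : ∀ i, 0 ≤ π i) (u : ι → E) :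
    0 ≤ weightedInner π u (markovOp (lazyWalk A) u) := by
  have h := abs_le.mp (abs_sum_sum_mul_inner_le hA hπ u)
  rw [weightedInner_markovOp_lazyWalk, weightedInner_markovOp]
  simp only [weightedInner_apply, real_inner_self_eq_norm_sq]
  linarith [h.1]

theorem sum_sum_mul_inner_nonneg {c : ι → ℝ} {M : Matrix ι ι ℝ}
    (hM : ∀ g : ι → ℝ, ∑ i, c i * g i = 0 → 0 ≤ ∑ i, ∑ j, M i j * g i * g j)
    {v : ι → E} (hv : ∑ i, c i • v i = 0) : 0 ≤ ∑ i, ∑ j, M i j * ⟪v i, v j⟫ := by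
  let S := Submodule.span ℝ (Set.range v)
  have : FiniteDimensional ℝ S := .span_of_finite ℝ (Set.finite_range v)
  let b := stdOrthonormalBasis ℝ S
  let w : ι → S := fun i => ⟨v i, Submodule.subset_span ⟨i, rfl⟩⟩
  have hinner (i j : ι) : ⟪v i, v j⟫ = ∑ k, ⟪(b k : E), v i⟫ * ⟪(b k : E), v j⟫ := by
    rw [show ⟪v i, v j⟫ = ⟪w i, w j⟫ from rfl, ← b.sum_inner_mul_inner (w i) (w j)]
    congr 1 with k
    rw [real_inner_comm]
    rfl
  have hmean (k) : ∑ i, c i * ⟪(b k : E), v i⟫ = 0 := by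
    simp_rw [← inner_smul_right, ← inner_sum, hv, inner_zero_right]
  calc 0 ≤ ∑ k, ∑ i, ∑ j, M i j * ⟪(b k : E), v i⟫ * ⟪(b k : E), v j⟫ :=
        sum_nonneg fun k _ => hM _ (hmean k)
    _ = ∑ i, ∑ j, M i j * ⟪v i, v j⟫ := by
        simp_rw [hinner, mul_sum, ← mul_assoc]
        rw [sum_comm]
        exact sum_congr rfl fun i _ => sum_comm

end Hilbert

section Spectral

variable {n : ℕ} {π : Fin n → ℝ} {A : Matrix (Fin n) (Fin n) ℝ}

theorem le_lambdaTwo (hA : IsReversibleStochastic π A) (hπ : ∀ i, 0 ≤ π i) {u : Fin n → ℝ}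
    (hu₀ : ∑ i, π i * u i = 0) (hu₁ : ∑ i, π i * u i ^ 2 = 1) :
    ∑ i, ∑ j, π i * A i j * u i * u j ≤ lambdaTwo n π A := by
  refine le_csSup ⟨1, ?_⟩ ⟨u, hu₀, hu₁, rfl⟩
  rintro _ ⟨v, -, hv₁, rfl⟩
  exact (le_abs_self _).trans (hv₁ ▸ abs_sum_sum_mul_mul_le hA hπ v)

theorem neg_one_le_lambdaTwo (hA : IsReversibleStochastic π A) (hπ : ∀ i, 0 ≤ π i) :
    -1 ≤ lambdaTwo n π A := by
  by_cases h : ∃ u : Fin n → ℝ, ∑ i, π i * u i = 0 ∧ ∑ i, π i * u i ^ 2 = 1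
  · obtain ⟨u, hu₀, hu₁⟩ := h
    have := neg_abs_le (∑ i, ∑ j, π i * A i j * u i * u j)
    linarith [hu₁ ▸ abs_sum_sum_mul_mul_le hA hπ u, le_lambdaTwo hA hπ hu₀ hu₁]
  · -- the defining set is empty (e.g. `n ≤ 1`), and `sSup ∅ = 0`
    have hempty : {r : ℝ | ∃ u : Fin n → ℝ, ∑ i, π i * u i = 0 ∧
        ∑ i, π i * u i ^ 2 = 1 ∧ r = ∑ i, ∑ j, π i * A i j * u i * u j} = ∅ :=
      Set.eq_empty_of_forall_notMem fun _ ⟨u, hu₀, hu₁, _⟩ => h ⟨u, hu₀, hu₁⟩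
    rw [lambdaTwo, hempty, Real.sSup_empty]
    norm_num

theorem sum_sum_mul_mul_le_lambdaTwo (hA : IsReversibleStochastic π A) (hπ : ∀ i, 0 ≤ π i)
    {g : Fin n → ℝ} (hg : ∑ i, π i * g i = 0) :
    ∑ i, ∑ j, π i * A i j * g i * g j ≤ lambdaTwo n π A * ∑ i, π i * g i ^ 2 := by
  have h := abs_sum_sum_mul_mul_le hA hπ g
  rcases (sum_nonneg fun i _ => mul_nonneg (hπ i) (sq_nonneg (g i))).eq_or_lt with hs | hs
  · rw [← hs] at h ⊢
    rw [mul_zero]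
    exact (le_abs_self _).trans h
  set s := ∑ i, π i * g i ^ 2
  set c := (√s)⁻¹
  have hc : c ^ 2 * s = 1 := by rw [inv_pow, Real.sq_sqrt hs.le, inv_mul_cancel₀ hs.ne']
  have hu := le_lambdaTwo hA hπ (u := c • g)
    (by simp_rw [Pi.smul_apply, smul_eq_mul, mul_left_comm (π _) c, ← mul_sum, hg, mul_zero])
    (by simp_rw [Pi.smul_apply, smul_eq_mul, mul_pow, mul_left_comm (π _) (c ^ 2), ← mul_sum]
        exact hc)
  have hscale (i j : Fin n) :
      π i * A i j * (c • g) i * (c • g) j = c ^ 2 * (π i * A i j * g i * g j) := by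
    simp only [Pi.smul_apply, smul_eq_mul]; ring
  calc ∑ i, ∑ j, π i * A i j * g i * g j
      = s * ∑ i, ∑ j, π i * A i j * (c • g) i * (c • g) j := by
        simp only [hscale, ← mul_sum]
        rw [← mul_assoc, mul_comm s, hc, one_mul]
    _ ≤ s * lambdaTwo n π A := mul_le_mul_of_nonneg_left hu hs.le
    _ = _ := mul_comm _ _

variable {E : Type*} [NormedAddCommGroup E] [InnerProductSpace ℝ E]

theorem sum_sum_mul_inner_le_lambdaTwo (hA : IsReversibleStochastic π A) (hπ : ∀ i, 0 ≤ π i)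
    {v : Fin n → E} (hv : ∑ i, π i • v i = 0) :
    ∑ i, ∑ j, π i * A i j * ⟪v i, v j⟫ ≤ lambdaTwo n π A * ∑ i, π i * ‖v i‖ ^ 2 := by
  let M : Matrix (Fin n) (Fin n) ℝ :=
    Matrix.of fun i j => (if i = j then lambdaTwo n π A * π i else 0) - π i * A i j
  have hM (f : Fin n → Fin n → ℝ) :
      ∑ i, ∑ j, M i j * f i j = lambdaTwo n π A * ∑ i, π i * f i i -
        ∑ i, ∑ j, π i * A i j * f i j := by
    simp [M, sub_mul, sum_sub_distrib, ite_mul, mul_sum, mul_assoc]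
  have key := sum_sum_mul_inner_nonneg (M := M) (c := π) (fun g hg => ?_) hv
  · simp_rw [hM, real_inner_self_eq_norm_sq] at key
    linarith
  · have hQ := sum_sum_mul_mul_le_lambdaTwo hA hπ hg
    simp only [mul_assoc, hM fun i j => g i * g j, ← sq] at hQ ⊢
    linarith

theorem weightedL2Norm_markovOp_lazyWalk_pow_le (hA : IsReversibleStochastic π A)
    (hπ : ∀ i, 0 ≤ π i) (t : ℕ) {v : Fin n → E} (hv : ∑ i, π i • v i = 0) :
    weightedL2Norm π ((markovOp (lazyWalk A) ^ t) v) ≤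
      ((1 + lambdaTwo n π A) / 2) ^ t * weightedL2Norm π v := by
  have hμ : 0 ≤ (1 + lambdaTwo n π A) / 2 := by linarith [neg_one_le_lambdaTwo hA hπ]
  have hrayleigh (u : Fin n → E) (hu : ∑ i, π i • u i = 0) :
      weightedInner π u (markovOp (lazyWalk A) u) ≤
        (1 + lambdaTwo n π A) / 2 * weightedInner π u u := by
    have := sum_sum_mul_inner_le_lambdaTwo hA hπ hu
    rw [weightedInner_markovOp_lazyWalk, weightedInner_markovOp]
    simp only [weightedInner_apply, real_inner_self_eq_norm_sq]
    linarith
  have key := (weightedInner (E := E) π).apply_pow_pow_le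
    (fun u => by rw [weightedInner_self hπ]; positivity)
    (weightedInner_markovOp_comm hA.lazyWalk.reversible)
    (weightedInner_markovOp_lazyWalk_nonneg hA hπ)
    (V := {u : Fin n → E | ∑ i, π i • u i = 0})
    (fun u hu => (sum_smul_markovOp hA.lazyWalk u).trans hu) hrayleigh t hv
  rw [weightedInner_self hπ, weightedInner_self hπ, pow_right_comm, ← mul_pow] at key
  exact (pow_le_pow_iff_left₀ (Real.sqrt_nonneg _)
    (mul_nonneg (pow_nonneg hμ t) (Real.sqrt_nonneg _)) two_ne_zero).1 key

end Spectral

section Poincare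

variable {X : Type*} [NormedAddCommGroup X] [NormedSpace ℝ X]
  {H : Type*} [NormedAddCommGroup H] [InnerProductSpace ℝ H]
  {n : ℕ} {π : Fin n → ℝ} {A : Matrix (Fin n) (Fin n) ℝ}

theorem sum_sum_mul_mul_norm_sub_sq_le_of_hilbert_isomorph (T : X →ₗ[ℝ] H) {d : ℝ} (hd : 0 ≤ d)
    (hT : ∀ y, ‖T y‖ ≤ ‖y‖ ∧ ‖y‖ ≤ d * ‖T y‖) (hA : IsReversibleStochastic π A)
    (hπ : ∀ i, 0 ≤ π i) (hπ₁ : ∑ i, π i = 1) {t : ℕ}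
    (ht : d * ((1 + lambdaTwo n π A) / 2) ^ t ≤ 1 / 2) (x : Fin n → X) :
    ∑ i, ∑ j, π i * π j * ‖x i - x j‖ ^ 2 ≤
      8 * t ^ 2 * ∑ i, ∑ j, π i * A i j * ‖x i - x j‖ ^ 2 := by
  set P : Module.End ℝ (Fin n → X) := markovOp (lazyWalk A)
  set z : Fin n → X := x - fun _ => ∑ j, π j • x j
  have hTz : ∑ i, π i • T (z i) = 0 := by
    simp_rw [← map_smul, ← map_sum, z, Pi.sub_apply, smul_sub, sum_sub_distrib, ← sum_smul, hπ₁,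
      one_smul, sub_self, map_zero]
  have hPz : weightedL2Norm π ((P ^ t) z) ≤ weightedL2Norm π z / 2 :=
    calc weightedL2Norm π ((P ^ t) z)
        ≤ d * weightedL2Norm π (T ∘ (P ^ t) z) :=
          weightedL2Norm_le_mul_of_norm_le hπ hd fun i => (hT _).2
      _ = d * weightedL2Norm π ((markovOp (lazyWalk A) ^ t) (T ∘ z)) := by
          rw [markovOp_pow_compLeft]
      _ ≤ d * (((1 + lambdaTwo n π A) / 2) ^ t * weightedL2Norm π (T ∘ z)) :=
          mul_le_mul_of_nonneg_left (weightedL2Norm_markovOp_lazyWalk_pow_le hA hπ t hTz) hd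
      _ ≤ d * (((1 + lambdaTwo n π A) / 2) ^ t * weightedL2Norm π z) := by
          have := neg_one_le_lambdaTwo hA hπ
          gcongr
          · exact pow_nonneg (by linarith) t
          · simpa using weightedL2Norm_le_mul_of_norm_le hπ zero_le_one fun i => by
              rw [one_mul]; exact (hT (z i)).1
      _ ≤ weightedL2Norm π z / 2 := by
          nlinarith [mul_le_mul_of_nonneg_right ht (weightedL2Norm_nonneg π z)]
  have hsub : z - (P ^ t) z = x - (P ^ t) x := by
    simp only [z, P, map_sub, markovOp_pow_const hA.lazyWalk.sum_row]
    abel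
  have hz : weightedL2Norm π z ≤ 2 * (t * weightedL2Norm π (x - P x)) := by
    have := weightedL2Norm_add_le hπ (z - (P ^ t) z) ((P ^ t) z)
    rw [sub_add_cancel, hsub] at this
    linarith [weightedL2Norm_sub_markovOp_pow_le hA.lazyWalk hπ t x]
  calc ∑ i, ∑ j, π i * π j * ‖x i - x j‖ ^ 2
      ≤ 4 * weightedL2Norm π z ^ 2 := sum_sum_mul_mul_norm_sub_sq_le hπ hπ₁ x _
    _ ≤ 4 * (2 * (t * weightedL2Norm π (x - P x))) ^ 2 := by
        gcongr
        exact Real.sqrt_nonneg _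
    _ = 16 * t ^ 2 * weightedL2Norm π (x - P x) ^ 2 := by ring
    _ ≤ 16 * t ^ 2 * ((∑ i, ∑ j, π i * A i j * ‖x i - x j‖ ^ 2) / 2) := by
        gcongr
        rw [← sum_sum_mul_lazyWalk_norm_sub_sq]
        exact sq_weightedL2Norm_sub_markovOp_le hA.lazyWalk hπ x
    _ = _ := by ring

end Poincare

theorem nonlinearSpectralGapSq_le {n : ℕ} {π : Fin n → ℝ} {A : Matrix (Fin n) (Fin n) ℝ}
    {X : Type*} [NormedAddCommGroup X] {γ : ℝ} (hγ : 0 < γ)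
    (h : ∀ x : Fin n → X, ∑ i, ∑ j, π i * π j * ‖x i - x j‖ ^ 2 ≤
      γ * ∑ i, ∑ j, π i * A i j * ‖x i - x j‖ ^ 2) :
    nonlinearSpectralGapSq n π A X ≤ γ :=
  csInf_le ⟨0, fun _ hγ' => hγ'.1.le⟩ ⟨hγ, h⟩

theorem pow_le_exp_neg {μ a : ℝ} {t : ℕ} (hμ : 0 ≤ μ) (ha : a ≤ (1 - μ) * t) :
    μ ^ t ≤ Real.exp (-a) :=
  calc μ ^ t ≤ Real.exp (-(1 - μ)) ^ t :=
        pow_le_pow_left₀ hμ (by linarith [Real.one_sub_le_exp_neg (1 - μ)]) t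
    _ = Real.exp (-((1 - μ) * t)) := by rw [← Real.exp_nat_mul]; ring_nf
    _ ≤ Real.exp (-a) := Real.exp_le_exp.2 (by linarith)

theorem exists_nat_mul_pow_le_half {d l : ℝ} (hd : 1 ≤ d) (hl₀ : -1 ≤ l) (hl₁ : l < 1) :
    ∃ t : ℕ, 0 < t ∧ d * ((1 + l) / 2) ^ t ≤ 1 / 2 ∧
      (t : ℝ) ≤ 6 * Real.log (2 * d) / (1 - l) := by
  have hlog : 1 / 2 ≤ Real.log (2 * d) := by
    linarith [Real.log_two_gt_d9, Real.log_le_log two_pos (by linarith : (2 : ℝ) ≤ 2 * d)]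
  set s := 2 * Real.log (2 * d) / (1 - l)
  have hs : 0 < s := by apply div_pos <;> linarith
  refine ⟨⌈s⌉₊, Nat.ceil_pos.2 hs, ?_, ?_⟩
  · have hexp := pow_le_exp_neg (μ := (1 + l) / 2) (t := ⌈s⌉₊) (by linarith)
      (a := Real.log (2 * d)) <| by
        calc Real.log (2 * d) = (1 - (1 + l) / 2) * s := by
              have : 1 - l ≠ 0 := by linarith
              simp only [s]; field_simp; ring
          _ ≤ _ := mul_le_mul_of_nonneg_left (Nat.le_ceil s) (by linarith)
    rw [Real.exp_neg, Real.exp_log (by linarith)] at hexp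
    calc d * ((1 + l) / 2) ^ ⌈s⌉₊ ≤ d * (2 * d)⁻¹ := by gcongr
      _ = 1 / 2 := by field_simp
  · have h1 : 1 ≤ 4 * Real.log (2 * d) / (1 - l) := by
      rw [le_div_iff₀ (by linarith)]; linarith
    have h2 := (Nat.ceil_lt_add_one hs.le).le
    calc (⌈s⌉₊ : ℝ) ≤ s + 4 * Real.log (2 * d) / (1 - l) := by linarith
      _ = 6 * Real.log (2 * d) / (1 - l) := by ring

/-- Nonlinear spectral gap bound for Hilbert isomorphs:
√γ(A, ‖·‖_X²) ≤ C log(2d)/(1 − λ₂(A)) for a universal constant C. -/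
theorem nonlinearSpectralGap_hilbert_isomorph :
    ∃ C : ℝ, 0 < C ∧
      ∀ (X : Type) [NormedAddCommGroup X] [NormedSpace ℝ X]
        (H : Type) [NormedAddCommGroup H] [InnerProductSpace ℝ H]
        (T : X ≃ₗ[ℝ] H) (d : ℝ), 1 ≤ d →
        (∀ y : X, ‖T y‖ ≤ ‖y‖ ∧ ‖y‖ ≤ d * ‖T y‖) →
      ∀ (n : ℕ) (π : Fin n → ℝ), (∀ i, 0 < π i) → (∑ i, π i) = 1 →
      ∀ (A : Matrix (Fin n) (Fin n) ℝ),
        (∀ i j, 0 ≤ A i j) → (∀ i, ∑ j, A i j = 1) →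
        (∀ i j, π i * A i j = π j * A j i) →
        lambdaTwo n π A < 1 →
        Real.sqrt (nonlinearSpectralGapSq n π A X) ≤
          C * Real.log (2 * d) / (1 - lambdaTwo n π A) := by
  refine ⟨18, by norm_num, ?_⟩
  intro X _ _ H _ _ T d hd hT n π hπ hπ₁ A hA₀ hA₁ hrev hl
  have hA : IsReversibleStochastic π A := ⟨hA₀, hA₁, hrev⟩
  obtain ⟨t, ht₀, ht, htl⟩ :=
    exists_nat_mul_pow_le_half hd (neg_one_le_lambdaTwo hA fun i => (hπ i).le) hl
  have hγ : nonlinearSpectralGapSq n π A X ≤ 8 * t ^ 2 :=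
    nonlinearSpectralGapSq_le (by positivity)
      (sum_sum_mul_mul_norm_sub_sq_le_of_hilbert_isomorph T.toLinearMap (by linarith) hT hA
        (fun i => (hπ i).le) hπ₁ ht)
  calc √(nonlinearSpectralGapSq n π A X) ≤ √((3 * t) ^ 2) := Real.sqrt_le_sqrt (by nlinarith)
    _ = 3 * t := Real.sqrt_sq (by positivity)
    _ ≤ 18 * Real.log (2 * d) / (1 - lambdaTwo n π A) := by
        rw [mul_div_assoc] at htl ⊢; linarith
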